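/- arXiv:2202.08737 — 4 statements merged into one kernel-verified Lean document; each statement's English description precedes it below -/
import Mathlib

section
/- Any k-plex with at least 2k - 1 vertices has diameter at most 2. Formally, if G = (V, E) has |V| ≥ 2k - 1 and every vertex has at least |V| - k neighbors, then for any two distinct nonadjacent vertices u, v there exists a vertex w adjacent to both u and v. -/
/-! If distinct nonadjacent `u`, `v` had no common neighbour, then `N(u)`, `N(v)` and `{u, v}`
would be disjoint, so `2 (n - k) + 2 ≤ n`, i.e. `n ≤ 2k - 2`. -/

namespace SimpleGraph

variable {V : Type*} [Fintype V] [DecidableEq V] (G : SimpleGraph V) [DecidableRel G.Adj]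

theorem degree_add_degree_add_two_le_card {u v : V} (huv : u ≠ v) (hnadj : ¬ G.Adj u v)
    (hcommon : ∀ w, G.Adj u w → ¬ G.Adj v w) :
    G.degree u + G.degree v + 2 ≤ Fintype.card V := by
  have hdisj : Disjoint (G.neighborFinset u) (G.neighborFinset v) :=
    Finset.disjoint_left.2 (by simpa using hcommon)
  have hdisj_pair : Disjoint (G.neighborFinset u ∪ G.neighborFinset v) {u, v} := by
    simp [hnadj, G.adj_comm v u]
  calc G.degree u + G.degree v + 2
      = (G.neighborFinset u ∪ G.neighborFinset v ∪ {u, v}).card := by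
        rw [Finset.card_union_of_disjoint hdisj_pair, Finset.card_union_of_disjoint hdisj,
          Finset.card_pair huv, card_neighborFinset_eq_degree, card_neighborFinset_eq_degree]
    _ ≤ Fintype.card V := Finset.card_le_univ _

end SimpleGraph

theorem stmt_2_general {V : Type*} [Fintype V] [DecidableEq V]
    (G : SimpleGraph V) [DecidableRel G.Adj] (k : ℕ)
    (hplex : ∀ v : V, Fintype.card V ≤ (G.neighborFinset v).card + k)
    (hcard : 2 * k - 1 ≤ Fintype.card V) :
    ∀ u v : V, u ≠ v → ¬ G.Adj u v → ∃ w : V, G.Adj u w ∧ G.Adj v w := by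
  intro u v huv hnadj
  by_contra! hcommon
  have hsum := G.degree_add_degree_add_two_le_card huv hnadj hcommon
  have hu := hplex u
  have hv := hplex v
  rw [G.card_neighborFinset_eq_degree] at hu hv
  omega

/-- Any k-plex with at least `2k - 1` vertices has diameter at most 2:
any two distinct nonadjacent vertices have a common neighbor. -/
theorem stmt_2 {V : Type*} [Fintype V] [DecidableEq V]
    (G : SimpleGraph V) [DecidableRel G.Adj] (k : ℕ) (hk : 1 ≤ k)
    (hplex : ∀ v : V, Fintype.card V ≤ (G.neighborFinset v).card + k)
    (hcard : 2 * k - 1 ≤ Fintype.card V) :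
    ∀ u v : V, u ≠ v → ¬ G.Adj u v → ∃ w : V, G.Adj u w ∧ G.Adj v w :=
  stmt_2_general G k hplex hcard
end

section
/- Let G[P] be a k-plex containing a vertex v with |P| ≥ 2k - 1. Then every vertex of P is either v itself, a neighbor of v, or a vertex at distance exactly 2 from v within G[P]. Formally, P ⊆ {v} ∪ N(v) ∪ N²(v), where N²(v) is computed in G[P]. -/
/-!
Let `u ∈ P` be neither `v` nor a neighbour of `v`. The neighbourhoods of `u` and `v` inside `P`
lie in `P \ {u, v}` and each has at least `|P| - k` elements; since `2 (|P| - k) > |P| - 2`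
once `|P| ≥ 2k - 1`, they meet, and a common neighbour gives a path `v - w - u` in `G[P]`.
-/

open Finset

namespace SimpleGraph

variable {V : Type*} (G : SimpleGraph V)

theorem dist_eq_two_of_adj_of_adj {u v w : V} (huv : u ≠ v) (hnadj : ¬G.Adj u v)
    (huw : G.Adj u w) (hwv : G.Adj w v) : G.dist u v = 2 := by
  rw [dist, edist_eq_two_iff.mpr ⟨huv, hnadj, w, huw, hwv.symm⟩]
  rfl

theorem exists_adj_adj_of_card_lt [DecidableRel G.Adj] {P : Finset V} {u v : V}
    (hu : u ∈ P) (hv : v ∈ P) (huv : u ≠ v) (hnadj : ¬G.Adj u v)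
    (hcard : #P < #(P.filter (G.Adj u)) + #(P.filter (G.Adj v)) + 2) :
    ∃ w ∈ P, G.Adj u w ∧ G.Adj v w := by
  classical
  by_contra! hnone
  have hdisj : Disjoint (P.filter (G.Adj u)) (P.filter (G.Adj v)) :=
    disjoint_filter.mpr fun w hw huw => hnone w hw huw
  have hsub : P.filter (G.Adj u) ∪ P.filter (G.Adj v) ⊆ (P.erase u).erase v := by
    intro w hw
    simp only [mem_union, mem_filter, mem_erase] at hw ⊢
    rcases hw with ⟨hwP, huw⟩ | ⟨hwP, hvw⟩
    · exact ⟨fun h => hnadj (h ▸ huw), huw.ne.symm, hwP⟩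
    · exact ⟨hvw.ne.symm, fun h => hnadj (h ▸ hvw.symm), hwP⟩
  have hle := card_le_card hsub
  rw [card_union_of_disjoint hdisj, card_erase_of_mem (mem_erase.mpr ⟨huv.symm, hv⟩),
    card_erase_of_mem hu] at hle
  have htwo : 2 ≤ #P := one_lt_card.mpr ⟨u, hu, v, hv, huv⟩
  omega

end SimpleGraph

theorem stmt_8_general {V : Type*}
    (G : SimpleGraph V) [DecidableRel G.Adj] (k : ℕ)
    (P : Finset V)
    (hplex : ∀ x ∈ P, P.card ≤ (P.filter (fun w => G.Adj x w)).card + k)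
    (hcard : 2 * k - 1 ≤ P.card)
    (v : V) (hv : v ∈ P) :
    ∀ u, ∀ hu : u ∈ P, u = v ∨ G.Adj v u ∨
      (G.induce (↑P : Set V)).dist ⟨v, hv⟩ ⟨u, hu⟩ = 2 := by
  intro u hu
  by_cases hvu : u = v
  · exact .inl hvu
  by_cases hadj : G.Adj v u
  · exact .inr (.inl hadj)
  have hv' : #P ≤ #(P.filter (G.Adj v)) + k := hplex v hv
  have hu' : #P ≤ #(P.filter (G.Adj u)) + k := hplex u hu
  obtain ⟨w, hw, hvw, huw⟩ :=
    G.exists_adj_adj_of_card_lt hv hu (Ne.symm hvu) hadj (by omega)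
  exact .inr (.inr ((G.induce (↑P : Set V)).dist_eq_two_of_adj_of_adj (w := ⟨w, hw⟩)
    (fun h => hvu (congrArg Subtype.val h).symm) hadj hvw huw.symm))

/-- In a k-plex `G[P]` with `|P| ≥ 2k - 1` containing `v`, every vertex of `P`
is `v` itself, a neighbor of `v`, or at distance exactly 2 from `v` in `G[P]`. -/
theorem stmt_8 {V : Type*} [Fintype V] [DecidableEq V]
    (G : SimpleGraph V) [DecidableRel G.Adj] (k : ℕ) (hk : 1 ≤ k)
    (P : Finset V)
    (hplex : ∀ x ∈ P, P.card ≤ (P.filter (fun w => G.Adj x w)).card + k)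
    (hcard : 2 * k - 1 ≤ P.card)
    (v : V) (hv : v ∈ P) :
    ∀ u, ∀ hu : u ∈ P, u = v ∨ G.Adj v u ∨
      (G.induce (↑P : Set V)).dist ⟨v, hv⟩ ⟨u, hu⟩ = 2 :=
  stmt_8_general G k P hplex hcard v hv
end

section
/- For every integer k ≥ 1, the largest real root γ_k of 1 = x⁻¹ + ... + x^{-(k+1)} satisfies γ_k ≤ 2 - 1/2^{k+1}. -/
/-!
Multiplying the equation by `x - 1` turns it into `x ^ n * (2 - x) = 1`. A root above
`2 - 1 / 2 ^ n` lies in `(1, 2)`, where `x ^ n ≤ 2 ^ n` and `2 - x < 1 / 2 ^ n`, so the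
product would be smaller than `1`; at or beyond `2` it is not positive.
-/

theorem pow_mul_two_sub_eq_one_of_pow_eq_geom_sum {x : ℝ} {n : ℕ}
    (hx : x ^ n = ∑ i ∈ Finset.range n, x ^ i) : x ^ n * (2 - x) = 1 := by
  have h := geom_sum_mul x n
  rw [← hx] at h
  linarith

theorem le_two_sub_one_div_two_pow_of_pow_mul_two_sub_eq_one {x : ℝ} {n : ℕ}
    (hx : x ^ n * (2 - x) = 1) : x ≤ 2 - 1 / 2 ^ n := by
  by_contra! hlt
  have hpow_pos : (0 : ℝ) < 2 ^ n := by positivity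
  have hone_div_le : 1 / (2 : ℝ) ^ n ≤ 1 := by
    rw [div_le_one hpow_pos]
    exact one_le_pow₀ one_le_two
  have hx_pos : 0 < x := by linarith
  rcases lt_or_ge x 2 with hx_lt | hx_ge
  · have := calc
      x ^ n * (2 - x) ≤ 2 ^ n * (2 - x) := by gcongr
      _ < 2 ^ n * (1 / 2 ^ n) := by gcongr; linarith
      _ = 1 := mul_one_div_cancel hpow_pos.ne'
    linarith
  · have : x ^ n * (2 - x) ≤ 0 :=
      mul_nonpos_of_nonneg_of_nonpos (by positivity) (by linarith)
    linarith

theorem stmt_15_general (k : ℕ) (γ : ℝ)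
    (hγ : IsGreatest {x : ℝ | x ^ (k + 1) = ∑ i ∈ Finset.range (k + 1), x ^ i} γ) :
    γ ≤ 2 - 1 / 2 ^ (k + 1) :=
  le_two_sub_one_div_two_pow_of_pow_mul_two_sub_eq_one
    (pow_mul_two_sub_eq_one_of_pow_eq_geom_sum hγ.1)

/-- For `k ≥ 1`, the largest real root `γ` of `x^(k+1) = x^k + ⋯ + x + 1`
satisfies `γ ≤ 2 - 1/2^(k+1)`. -/
theorem stmt_15 (k : ℕ) (hk : 1 ≤ k) (γ : ℝ)
    (hγ : IsGreatest {x : ℝ | x ^ (k + 1) = ∑ i ∈ Finset.range (k + 1), x ^ i} γ) :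
    γ ≤ 2 - 1 / 2 ^ (k + 1) :=
  stmt_15_general k γ hγ
end

section
/- In a k-plex G[P] with |P| ≥ 2k - 1 containing vertex v₁, any vertex u ∈ P nonadjacent to v₁ and distinct from v₁ has a common neighbor with v₁ inside P. Formally, if every vertex of G[P] has at least |P| - k neighbors in P, |P| ≥ 2k - 1, v₁, u ∈ P distinct with (v₁, u) ∉ E, then N(v₁) ∩ N(u) ∩ P ≠ ∅. -/
/-!
If `v₁` and `u` had no common neighbour in `P`, their neighbourhoods in `P` and the pair
`{v₁, u}` would be pairwise disjoint subsets of `P`, so `2 (|P| - k) + 2 ≤ |P|`, i.e.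
`|P| ≤ 2k - 2`.
-/

namespace SimpleGraph

variable {V : Type*} [DecidableEq V] (G : SimpleGraph V) [DecidableRel G.Adj]

lemma card_filter_adj_add_card_filter_adj_add_two_le {P : Finset V} {v u : V}
    (hv : v ∈ P) (hu : u ∈ P) (hne : v ≠ u) (hnadj : ¬ G.Adj v u)
    (hno_common : ∀ w ∈ P, G.Adj v w → ¬ G.Adj u w) :
    (P.filter (G.Adj v)).card + (P.filter (G.Adj u)).card + 2 ≤ P.card := by
  have hdisj : Disjoint (P.filter (G.Adj v)) (P.filter (G.Adj u)) :=
    Finset.disjoint_filter.2 hno_common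
  have hpair : Disjoint (P.filter (G.Adj v) ∪ P.filter (G.Adj u)) {v, u} := by
    simp [G.adj_comm u v, hnadj]
  calc (P.filter (G.Adj v)).card + (P.filter (G.Adj u)).card + 2
      = (P.filter (G.Adj v) ∪ P.filter (G.Adj u) ∪ {v, u}).card := by
        rw [Finset.card_union_of_disjoint hpair, Finset.card_union_of_disjoint hdisj,
          Finset.card_pair hne]
    _ ≤ P.card := Finset.card_le_card <|
        Finset.union_subset (Finset.union_subset (Finset.filter_subset _ _)
          (Finset.filter_subset _ _)) (Finset.insert_subset hv (Finset.singleton_subset_iff.2 hu))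

end SimpleGraph

theorem stmt_19_general {V : Type*} [DecidableEq V]
    (G : SimpleGraph V) [DecidableRel G.Adj] (k : ℕ)
    (P : Finset V)
    (hplex : ∀ x ∈ P, P.card ≤ (P.filter (fun w => G.Adj x w)).card + k)
    (hcard : 2 * k - 1 ≤ P.card)
    (v₁ u : V) (hv : v₁ ∈ P) (hu : u ∈ P) (hne : v₁ ≠ u) (hnadj : ¬ G.Adj v₁ u) :
    ∃ w ∈ P, G.Adj v₁ w ∧ G.Adj u w := by
  by_contra! hno_common
  have hsum := G.card_filter_adj_add_card_filter_adj_add_two_le hv hu hne hnadj hno_common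
  have hv₁ : P.card ≤ (P.filter (G.Adj v₁)).card + k := hplex v₁ hv
  have hu' : P.card ≤ (P.filter (G.Adj u)).card + k := hplex u hu
  omega

/-- In a k-plex `G[P]` with `|P| ≥ 2k - 1`, any vertex `u ∈ P` distinct from
and nonadjacent to `v₁ ∈ P` has a common neighbor with `v₁` inside `P`. -/
theorem stmt_19 {V : Type*} [Fintype V] [DecidableEq V]
    (G : SimpleGraph V) [DecidableRel G.Adj] (k : ℕ) (hk : 1 ≤ k)
    (P : Finset V)
    (hplex : ∀ x ∈ P, P.card ≤ (P.filter (fun w => G.Adj x w)).card + k)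
    (hcard : 2 * k - 1 ≤ P.card)
    (v₁ u : V) (hv : v₁ ∈ P) (hu : u ∈ P) (hne : v₁ ≠ u) (hnadj : ¬ G.Adj v₁ u) :
    ∃ w ∈ P, G.Adj v₁ w ∧ G.Adj u w :=
  stmt_19_general G k P hplex hcard v₁ u hv hu hne hnadj
end
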